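/- For any pure quantum state |ψ⟩ on m ≥ n qubits and any bit string (b₁,...,bₙ) ∈ {0,1}ⁿ, letting Λ_{b} := ∑_{e ≠ b} |e⟩⟨e| be the projector onto computational basis states of the first n qubits differing from b, it holds that ⟨ψ|(|+⟩⟨+|^{⊗n} ⊗ I)|ψ⟩ ≤ 2⟨ψ|(Λ_{b} ⊗ I)|ψ⟩ + 2^{-n+1}. -/

import Mathlib

/-!
Split `∑ₑ ψ(e, r) = ψ(b, r) + ∑_{e ≠ b} ψ(e, r)`. The triangle inequality and `(x + y)² ≤ 2x² + 2y²`
bound `‖∑ₑ ψ(e, r)‖²` by `2‖ψ(b, r)‖²` plus twice the square of the second sum, and Cauchy–Schwarz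
bounds that square by `2ⁿ ∑_{e ≠ b} ‖ψ(e, r)‖²`. Summing over `r`, the `b`-terms contribute at
most `2` by normalisation; dividing by `2ⁿ` gives the claim.
-/

open Finset

lemma norm_add_sq_le {E : Type*} [SeminormedAddGroup E] (a b : E) :
    ‖a + b‖ ^ 2 ≤ 2 * (‖a‖ ^ 2 + ‖b‖ ^ 2) :=
  (pow_le_pow_left₀ (norm_nonneg _) (norm_add_le a b) 2).trans add_sq_le

lemma norm_sum_sq_le_card_mul_sum_norm_sq {ι E : Type*} [SeminormedAddCommGroup E]
    (s : Finset ι) (f : ι → E) :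
    ‖∑ i ∈ s, f i‖ ^ 2 ≤ #s * ∑ i ∈ s, ‖f i‖ ^ 2 :=
  (pow_le_pow_left₀ (norm_nonneg _) (norm_sum_le s f) 2).trans sq_sum_le_card_mul_sum_sq

lemma norm_sum_sq_le_two_mul_add_card_mul_sum_ne {ι E : Type*} [Fintype ι] [DecidableEq ι]
    [SeminormedAddCommGroup E] (f : ι → E) (b : ι) :
    ‖∑ i, f i‖ ^ 2
      ≤ 2 * ‖f b‖ ^ 2 + 2 * Fintype.card ι * ∑ i ∈ univ.filter (· ≠ b), ‖f i‖ ^ 2 := by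
  have hsplit : ∑ i, f i = f b + ∑ i ∈ univ.filter (· ≠ b), f i := by
    rw [filter_ne', add_sum_erase _ _ (mem_univ b)]
  have hcard : (#(univ.filter (· ≠ b)) : ℝ) ≤ Fintype.card ι := by
    exact_mod_cast card_le_univ _
  have hrest := (norm_sum_sq_le_card_mul_sum_norm_sq (univ.filter (· ≠ b)) f).trans
    (mul_le_mul_of_nonneg_right hcard (sum_nonneg fun i _ => sq_nonneg ‖f i‖))
  rw [hsplit]
  linarith [norm_add_sq_le (f b) (∑ i ∈ univ.filter (· ≠ b), f i)]

/-- For any pure quantum state |ψ⟩ on the first `n` qubits together with an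
arbitrary remaining register `R` (so `m ≥ n` qubits in total) and any bit string
`b ∈ {0,1}ⁿ`, the expectation of `|+⟩⟨+|^{⊗n} ⊗ I` is at most twice the expectation of
`Λ_b ⊗ I` plus `2^{-n+1}`.  Here the `|+⟩⟨+|^{⊗n} ⊗ I` expectation is
`2^{-n} ∑_r ‖∑_e ψ(e,r)‖²` and the `Λ_b ⊗ I` expectation is `∑_r ∑_{e ≠ b} ‖ψ(e,r)‖²`. -/
theorem stmt_0 {n : ℕ} {R : Type*} [Fintype R]
    (ψ : ((Fin n → Bool) × R) → ℂ)
    (hψ : ∑ x : (Fin n → Bool) × R, ‖ψ x‖ ^ 2 = 1)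
    (b : Fin n → Bool) :
    (1 / 2 ^ n : ℝ) * ∑ r : R, ‖∑ e : Fin n → Bool, ψ (e, r)‖ ^ 2
      ≤ 2 * ∑ r : R, ∑ e ∈ Finset.univ.filter (fun e : Fin n → Bool => e ≠ b), ‖ψ (e, r)‖ ^ 2
        + 2 / 2 ^ n := by
  have hb : ∑ r : R, ‖ψ (b, r)‖ ^ 2 ≤ 1 := by
    rw [← hψ, Fintype.sum_prod_type]
    exact single_le_sum (f := fun e => ∑ r : R, ‖ψ (e, r)‖ ^ 2)
      (fun _ _ => sum_nonneg fun _ _ => sq_nonneg _) (mem_univ b)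
  have hsum := sum_le_sum fun r (_ : r ∈ univ) =>
    norm_sum_sq_le_two_mul_add_card_mul_sum_ne (fun e => ψ (e, r)) b
  simp only [sum_add_distrib, ← mul_sum, Fintype.card_fun, Fintype.card_bool,
    Fintype.card_fin, Nat.cast_pow, Nat.cast_ofNat] at hsum
  have hpow : (0 : ℝ) < 2 ^ n := by positivity
  rw [one_div_mul_eq_div, div_le_iff₀ hpow, add_mul, div_mul_cancel₀ _ hpow.ne']
  linarith
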